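/- arXiv:1503.03863 — 3 statements merged into one kernel-verified Lean document; each statement's English description precedes it below -/
import Mathlib

section
/- Let Ψ(t) be a differentiable family of n×n matrices. Then d/dt exp(Ψ(t)) = ∫_0^1 exp((1-α)Ψ(t)) · (dΨ/dt)(t) · exp(αΨ(t)) dα. -/
/-! Differentiating `α ↦ exp ((1 - α) • A) * exp (α • B)` and integrating over `[0, 1]` gives
Duhamel's formula `exp B - exp A = ∫ α in 0..1, exp ((1 - α) • A) * (B - A) * exp (α • B)` in any
real Banach algebra. With `A = Ψ t` and `B = Ψ s` it writes the difference quotient of `exp ∘ Ψ`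
as the same integral with `B - A` replaced by the difference quotient of `Ψ`. The integral
depends jointly continuously on `A`, `B` and the middle factor, so the limit `s → t` can be taken
inside it. -/

open Matrix MeasureTheory NormedSpace Filter Topology

attribute [local instance] Matrix.linftyOpNormedRing Matrix.linftyOpNormedAlgebra

section Duhamel

variable {𝔸 : Type*} [NormedRing 𝔸] [NormedAlgebra ℝ 𝔸]

noncomputable def duhamelIntegral (A B M : 𝔸) : 𝔸 :=
  ∫ α in (0 : ℝ)..1, exp ((1 - α) • A) * M * exp (α • B)

theorem smul_duhamelIntegral (c : ℝ) (A B M : 𝔸) :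
    c • duhamelIntegral A B M = duhamelIntegral A B (c • M) := by
  simp only [duhamelIntegral, ← intervalIntegral.integral_smul, mul_smul_comm, smul_mul_assoc]

variable [CompleteSpace 𝔸]

theorem hasDerivAt_exp_smul_mul_exp_smul (A B : 𝔸) (α : ℝ) :
    HasDerivAt (fun α : ℝ => exp ((1 - α) • A) * exp (α • B))
      (exp ((1 - α) • A) * (B - A) * exp (α • B)) α := by
  have hA : HasDerivAt (fun α : ℝ => exp ((1 - α) • A)) (-(exp ((1 - α) • A) * A)) α := by
    simpa [Function.comp_def] using
      (hasDerivAt_exp_smul_const A (1 - α)).scomp α ((hasDerivAt_id α).const_sub 1)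
  refine (hA.mul (hasDerivAt_exp_smul_const' B α)).congr_deriv ?_
  simp only [mul_sub, sub_mul, mul_assoc, neg_mul]
  abel

@[fun_prop]
theorem exp_continuous_of_normedAlgebra_real : Continuous (exp : 𝔸 → 𝔸) :=
  continuous_iff_continuousAt.2 fun A => (exp_analytic (𝕂 := ℝ) A).continuousAt

theorem continuous_duhamelIntegral :
    Continuous fun p : 𝔸 × 𝔸 × 𝔸 => duhamelIntegral p.1 p.2.1 p.2.2 :=
  intervalIntegral.continuous_parametric_intervalIntegral_of_continuous' (by fun_prop) 0 1

theorem exp_sub_exp_eq_duhamelIntegral (A B : 𝔸) :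
    exp B - exp A = duhamelIntegral A B (B - A) := by
  have hcont : Continuous fun α : ℝ => exp ((1 - α) • A) * (B - A) * exp (α • B) := by
    fun_prop
  rw [duhamelIntegral, intervalIntegral.integral_eq_sub_of_hasDerivAt
    (fun α _ => hasDerivAt_exp_smul_mul_exp_smul A B α) (hcont.intervalIntegrable 0 1)]
  simp

theorem slope_exp_comp (Ψ : ℝ → 𝔸) (t s : ℝ) :
    slope (fun s => exp (Ψ s)) t s = duhamelIntegral (Ψ t) (Ψ s) (slope Ψ t s) := by
  rw [slope_def_module, slope_def_module, exp_sub_exp_eq_duhamelIntegral, smul_duhamelIntegral]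

theorem hasDerivAt_exp_comp {Ψ : ℝ → 𝔸} {Ψ' : 𝔸} {t : ℝ} (h : HasDerivAt Ψ Ψ' t) :
    HasDerivAt (fun s => exp (Ψ s)) (duhamelIntegral (Ψ t) (Ψ t) Ψ') t := by
  have hΨ : Tendsto Ψ (𝓝[≠] t) (𝓝 (Ψ t)) := h.continuousAt.tendsto.mono_left nhdsWithin_le_nhds
  rw [hasDerivAt_iff_tendsto_slope, funext (slope_exp_comp Ψ t)]
  exact continuous_duhamelIntegral.continuousAt.tendsto.comp
    (tendsto_const_nhds.prodMk_nhds (hΨ.prodMk_nhds (hasDerivAt_iff_tendsto_slope.mp h)))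

end Duhamel

theorem wilcox_formula_general {n : ℕ} (Ψ Ψ' : ℝ → Matrix (Fin n) (Fin n) ℝ)
    (hderiv : ∀ t, HasDerivAt Ψ (Ψ' t) t) (t : ℝ) :
    HasDerivAt (fun s => exp (Ψ s))
      (∫ α in (0:ℝ)..1, exp ((1 - α) • Ψ t) * Ψ' t * exp (α • Ψ t)) t :=
  hasDerivAt_exp_comp (hderiv t)

/-- Wilcox formula for the derivative of the matrix exponential. -/
theorem wilcox_formula {n : ℕ} (Ψ Ψ' : ℝ → Matrix (Fin n) (Fin n) ℝ)
    (hcont : Continuous Ψ') (hderiv : ∀ t, HasDerivAt Ψ (Ψ' t) t) (t : ℝ) :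
    HasDerivAt (fun s => exp (Ψ s))
      (∫ α in (0:ℝ)..1, exp ((1 - α) • Ψ t) * Ψ' t * exp (α • Ψ t)) t :=
  wilcox_formula_general Ψ Ψ' hderiv t
end

section
/- Let Ψ be a real symmetric n×n matrix with spectral decomposition Ψ = Σ_i λ_i P_i (P_i = e_i e_i^T for an orthonormal eigenbasis), and let ε be any real symmetric n×n matrix. Define F(Ψ, ε) = Σ_{i,j} f(λ_i - λ_j) P_i ε P_j with f(x) = x/tanh(x/2) (f(0) = 2). Then ∫_0^1 exp((1-α)Ψ) F(Ψ, ε) exp(αΨ) dα = ε·exp(Ψ) + exp(Ψ)·ε. -/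
/-!
With `Pᵢ = eᵢ eᵢᵀ` the `Pᵢ` are complete orthogonal idempotents, so `d ↦ ∑ dᵢ Pᵢ` is a continuous
algebra homomorphism `ℝⁿ → Mₙ(ℝ)`; it commutes with `exp`, giving `exp (cΨ) = ∑ e^{cλᵢ} Pᵢ`.
Sandwiching `Pᵢ ε Pⱼ` between two such sums multiplies it by `e^{(1-α)λᵢ} e^{αλⱼ}`, so the integral
reduces entrywise to the scalar identity `f (a - b) ∫₀¹ e^{(1-α)a} e^{αb} dα = eᵃ + eᵇ`, which is
`tanh ((a - b)/2) = (eᵃ - eᵇ)/(eᵃ + eᵇ)`. Finally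
`∑ᵢⱼ (e^{λᵢ} + e^{λⱼ}) Pᵢ ε Pⱼ = exp Ψ ε + ε exp Ψ` because `∑ Pᵢ = 1`.
-/

namespace Real

theorem tanh_half_sub (a b : ℝ) : tanh ((a - b) / 2) = (exp a - exp b) / (exp a + exp b) := by
  have ha : exp a = exp ((a + b) / 2) * exp ((a - b) / 2) := by rw [← exp_add]; ring_nf
  have hb : exp b = exp ((a + b) / 2) * exp (-((a - b) / 2)) := by rw [← exp_add]; ring_nf
  rw [tanh_eq_sinh_div_cosh, sinh_eq, cosh_eq, ha, hb]
  have := exp_pos ((a + b) / 2)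
  field_simp

theorem integral_exp_one_sub_mul_mul_exp_mul {a b : ℝ} (hab : a ≠ b) :
    ∫ α in (0:ℝ)..1, exp ((1 - α) * a) * exp (α * b) = (exp a - exp b) / (a - b) := by
  have hba : b - a ≠ 0 := sub_ne_zero.mpr hab.symm
  have hderiv : ∀ α : ℝ, HasDerivAt (fun α ↦ exp (a + α * (b - a)) / (b - a))
      (exp ((1 - α) * a) * exp (α * b)) α := by
    intro α
    refine (((hasDerivAt_mul_const (b - a)).const_add a).exp.div_const (b - a)).congr_deriv ?_
    rw [← exp_add]
    field_simp
    ring_nf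
  rw [intervalIntegral.integral_eq_sub_of_hasDerivAt (fun α _ ↦ hderiv α)
    ((by fun_prop : Continuous _).intervalIntegrable _ _)]
  field_simp
  ring_nf

theorem integral_exp_one_sub_mul_mul_mul_exp_mul (f : ℝ → ℝ) (hf0 : f 0 = 2)
    (hf : ∀ x : ℝ, x ≠ 0 → f x = x / tanh (x / 2)) (a b : ℝ) :
    ∫ α in (0:ℝ)..1, exp ((1 - α) * a) * f (a - b) * exp (α * b) = exp a + exp b := by
  simp_rw [mul_right_comm _ (f (a - b)), intervalIntegral.integral_mul_const]
  rcases eq_or_ne a b with rfl | hab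
  · simp_rw [← exp_add, sub_self, hf0, ← add_mul, sub_add_cancel, one_mul,
      intervalIntegral.integral_const]
    ring
  · have hexp : exp a - exp b ≠ 0 := sub_ne_zero.mpr (exp_injective.ne hab)
    have hsub : a - b ≠ 0 := sub_ne_zero.mpr hab
    rw [integral_exp_one_sub_mul_mul_exp_mul hab, hf _ hsub, tanh_half_sub]
    have := exp_pos a
    have := exp_pos b
    field_simp

end Real

section Idempotents

variable {R A ι : Type*} [CommSemiring R] [Semiring A] [Algebra R A] [Fintype ι] {P : ι → A}

theorem sum_sum_add_smul_mul_mul (hP : ∑ i, P i = 1) (a b : ι → R) (x : A) :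
    ∑ i, ∑ j, (a i + b j) • (P i * x * P j) = (∑ i, a i • P i) * x + x * ∑ j, b j • P j := by
  have hleft : ∑ i, ∑ j, a i • (P i * x * P j) = (∑ i, a i • P i) * x := by
    simp_rw [← Finset.smul_sum, ← Finset.mul_sum, hP, mul_one, Finset.sum_mul, smul_mul_assoc]
  have hright : ∑ i, ∑ j, b j • (P i * x * P j) = x * ∑ j, b j • P j := by
    rw [Finset.sum_comm]
    simp_rw [← Finset.smul_sum, ← Finset.sum_mul, hP, one_mul, Finset.mul_sum, mul_smul_comm]
  simp_rw [add_smul, Finset.sum_add_distrib, hleft, hright]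

namespace OrthogonalIdempotents

theorem sum_smul_mul (hP : OrthogonalIdempotents P) (a : ι → R) (i : ι) :
    (∑ k, a k • P k) * P i = a i • P i := by
  classical
  simp [Finset.sum_mul, hP.mul_eq]

theorem mul_sum_smul (hP : OrthogonalIdempotents P) (a : ι → R) (i : ι) :
    P i * ∑ k, a k • P k = a i • P i := by
  classical
  simp [Finset.mul_sum, hP.mul_eq]

theorem sum_smul_mul_mul_mul_sum_smul (hP : OrthogonalIdempotents P) (a b : ι → R) (x : A)
    (i j : ι) :
    (∑ k, a k • P k) * (P i * x * P j) * (∑ l, b l • P l) = (a i * b j) • (P i * x * P j) := by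
  calc (∑ k, a k • P k) * (P i * x * P j) * (∑ l, b l • P l)
      = ((∑ k, a k • P k) * P i) * x * (P j * ∑ l, b l • P l) := by simp only [mul_assoc]
    _ = (a i * b j) • (P i * x * P j) := by
      rw [hP.sum_smul_mul, hP.mul_sum_smul, smul_mul_assoc, smul_mul_assoc, mul_smul_comm,
        smul_smul]

theorem sum_smul_mul_sum_sum_smul_mul_sum_smul (hP : OrthogonalIdempotents P) (a b : ι → R)
    (c : ι → ι → R) (x : A) :
    (∑ k, a k • P k) * (∑ i, ∑ j, c i j • (P i * x * P j)) * (∑ l, b l • P l)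
      = ∑ i, ∑ j, (a i * c i j * b j) • (P i * x * P j) := by
  set S := ∑ k, a k • P k with hS
  set T := ∑ l, b l • P l with hT
  simp only [Finset.mul_sum, Finset.sum_mul, mul_smul_comm, smul_mul_assoc]
  simp only [hS, hT, hP.sum_smul_mul_mul_mul_sum_smul, smul_smul, mul_comm (c _ _),
    mul_right_comm (a _) (b _)]

end OrthogonalIdempotents

variable (R) in
def CompleteOrthogonalIdempotents.sumSMulAlgHom (hP : CompleteOrthogonalIdempotents P) :
    (ι → R) →ₐ[R] A :=
  AlgHom.ofLinearMap (Fintype.linearCombination R P)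
    (by simp [Fintype.linearCombination_apply, hP.complete])
    (fun d d' ↦ by
      classical
      simp [Fintype.linearCombination_apply, Finset.sum_mul, Finset.mul_sum, hP.mul_eq, smul_smul,
        mul_comm])

end Idempotents

theorem CompleteOrthogonalIdempotents.exp_sum_smul {ι A : Type*} [Fintype ι] [NormedRing A]
    [NormedAlgebra ℝ A] [Algebra ℚ A] {P : ι → A}
    (hP : CompleteOrthogonalIdempotents P) (d : ι → ℝ) :
    NormedSpace.exp (∑ i, d i • P i) = ∑ i, Real.exp (d i) • P i := by
  have hcont : Continuous (hP.sumSMulAlgHom ℝ) :=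
    (hP.sumSMulAlgHom ℝ).toLinearMap.continuous_of_finiteDimensional
  simpa [CompleteOrthogonalIdempotents.sumSMulAlgHom, Fintype.linearCombination_apply,
    Pi.exp_def, Real.exp_eq_exp_ℝ] using
    (NormedSpace.map_exp _ hcont d).symm

open Matrix MeasureTheory NormedSpace

theorem Matrix.completeOrthogonalIdempotents_vecMulVec {m R : Type*} [Fintype m] [DecidableEq m]
    [CommRing R] {e : m → m → R} (he : ∀ i j, e i ⬝ᵥ e j = if i = j then 1 else 0) :
    CompleteOrthogonalIdempotents fun i ↦ vecMulVec (e i) (e i) := by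
  refine ⟨⟨fun i ↦ ?_, fun i j hij ↦ ?_⟩, ?_⟩
  · rw [IsIdempotentElem, vecMulVec_mul_vecMulVec, he, if_pos rfl, one_smul]
  · simp [vecMulVec_mul_vecMulVec, he, hij]
  · have hrows : of e * (of e)ᵀ = 1 := by
      ext i j
      simp [mul_apply, one_apply, ← he, dotProduct]
    rw [← mul_eq_one_comm.mp hrows]
    ext a b
    simp [sum_apply, mul_apply, vecMulVec_apply]

theorem intervalIntegral.integral_sum_sum_smul_const {ι κ E : Type*} [Fintype ι] [Fintype κ]
    [NormedAddCommGroup E] [NormedSpace ℝ E] [CompleteSpace E] {a b : ℝ} {g : ι → κ → ℝ → ℝ}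
    (hg : ∀ i j, IntervalIntegrable (g i j) volume a b) (v : ι → κ → E) :
    ∫ x in a..b, ∑ i, ∑ j, g i j x • v i j = ∑ i, ∑ j, (∫ x in a..b, g i j x) • v i j := by
  have hgv : ∀ p : ι × κ, IntervalIntegrable (fun x ↦ g p.1 p.2 x • v p.1 p.2) volume a b :=
    fun p ↦ ⟨(hg p.1 p.2).1.smul_const _, (hg p.1 p.2).2.smul_const _⟩
  simp_rw [← Fintype.sum_prod_type']
  rw [intervalIntegral.integral_finsetSum fun p _ ↦ hgv p]
  simp_rw [intervalIntegral.integral_smul_const]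

attribute [local instance] Matrix.linftyOpNormedRing Matrix.linftyOpNormedAlgebra

theorem central_identity_general {n : ℕ} (Ψ ε : Matrix (Fin n) (Fin n) ℝ)
    (e : Fin n → (Fin n → ℝ)) (lam : Fin n → ℝ)
    (horth : ∀ i j, e i ⬝ᵥ e j = if i = j then (1:ℝ) else 0)
    (hspec : Ψ = ∑ i, lam i • Matrix.vecMulVec (e i) (e i))
    (f : ℝ → ℝ) (hf0 : f 0 = 2) (hf : ∀ x : ℝ, x ≠ 0 → f x = x / Real.tanh (x / 2)) :
    ∫ α in (0:ℝ)..1,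
        exp ((1 - α) • Ψ) *
          (∑ i, ∑ j, f (lam i - lam j) •
            (Matrix.vecMulVec (e i) (e i) * ε * Matrix.vecMulVec (e j) (e j))) *
          exp (α • Ψ)
      = ε * exp Ψ + exp Ψ * ε := by
  have hP := completeOrthogonalIdempotents_vecMulVec horth
  have hexp (c : ℝ) : exp (c • Ψ) = ∑ i, Real.exp (c * lam i) • vecMulVec (e i) (e i) := by
    simp_rw [hspec, Finset.smul_sum, smul_smul]
    exact hP.exp_sum_smul _
  have hexp_one : exp Ψ = ∑ i, Real.exp (lam i) • vecMulVec (e i) (e i) := by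
    simpa using hexp 1
  simp_rw [hexp, hP.sum_smul_mul_sum_sum_smul_mul_sum_smul]
  rw [intervalIntegral.integral_sum_sum_smul_const
    (fun i j ↦ (by fun_prop : Continuous _).intervalIntegrable 0 1)]
  simp_rw [Real.integral_exp_one_sub_mul_mul_mul_exp_mul f hf0 hf]
  rw [hexp_one, add_comm, sum_sum_add_smul_mul_mul hP.complete]

/-- Central identity of the log-conformation formulation (eigenvalue form). -/
theorem central_identity {n : ℕ} (Ψ ε : Matrix (Fin n) (Fin n) ℝ) (hε : ε.IsSymm)
    (e : Fin n → (Fin n → ℝ)) (lam : Fin n → ℝ)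
    (horth : ∀ i j, e i ⬝ᵥ e j = if i = j then (1:ℝ) else 0)
    (hspec : Ψ = ∑ i, lam i • Matrix.vecMulVec (e i) (e i))
    (f : ℝ → ℝ) (hf0 : f 0 = 2) (hf : ∀ x : ℝ, x ≠ 0 → f x = x / Real.tanh (x / 2)) :
    ∫ α in (0:ℝ)..1,
        exp ((1 - α) • Ψ) *
          (∑ i, ∑ j, f (lam i - lam j) •
            (Matrix.vecMulVec (e i) (e i) * ε * Matrix.vecMulVec (e j) (e j))) *
          exp (α • Ψ)
      = ε * exp Ψ + exp Ψ * ε :=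
  central_identity_general Ψ ε e lam horth hspec f hf0 hf
end

section
/- For pairwise distinct real numbers λ_i, λ_j, λ_k, setting x = (λ_i - λ_j)/3, y = (λ_i - λ_k)/3, z = (λ_j - λ_k)/3 (so that z = y - x), the second divided difference e^{λ_i}/((λ_i-λ_j)(λ_i-λ_k)) + e^{λ_j}/((λ_j-λ_i)(λ_j-λ_k)) + e^{λ_k}/((λ_k-λ_i)(λ_k-λ_j)) equals (1/9) e^{λ_i/3} e^{λ_j/3} e^{λ_k/3} · [ g(x)g(y) + g(-x)g(z) + g(-y)g(-z) + (g(-x) - g(-y))/(y - x) + (g(x) - g(-z))/(x + z) + (g(y) - g(z))/(y - z) ], where g(t) = (e^t - 1)/t. -/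
/-!
Writing `s = (λ_i + λ_j + λ_k) / 3`, the three points are `s + (x + y)`, `s + (z - x)` and
`s - (y + z)`, so the divided difference is `e^s / 9` times
`e^x e^y / (x y) - e^{-x} e^z / (x z) + e^{-y} e^{-z} / (y z)`.
Expanding each product `g(·) g(·)` produces exactly these three terms plus terms linear in
`e^{±x}, e^{±y}, e^{±z}` and constants, and the three difference quotients of `g` cancel those.
-/

open Real

theorem sum_mul_add_sum_slope_eq (E G : ℝ → ℝ) (hG : ∀ t : ℝ, t ≠ 0 → G t = (E t - 1) / t)
    {x y z : ℝ} (hx : x ≠ 0) (hy : y ≠ 0) (hz : z ≠ 0) (hzyx : z = y - x) :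
    G x * G y + G (-x) * G z + G (-y) * G (-z)
        + (G (-x) - G (-y)) / (y - x) + (G x - G (-z)) / (x + z) + (G y - G z) / (y - z)
      = E x * E y / (x * y) - E (-x) * E z / (x * z) + E (-y) * E (-z) / (y * z) := by
  rw [hG x hx, hG y hy, hG z hz, hG (-x) (neg_ne_zero.2 hx), hG (-y) (neg_ne_zero.2 hy),
    hG (-z) (neg_ne_zero.2 hz)]
  subst hzyx
  rw [show x + (y - x) = y by ring, show y - (y - x) = x by ring]
  field_simp
  ring

theorem second_divided_difference_identity (li lj lk : ℝ)
    (hij : li ≠ lj) (hik : li ≠ lk) (hjk : lj ≠ lk)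
    (g : ℝ → ℝ) (hg : ∀ t : ℝ, t ≠ 0 → g t = (Real.exp t - 1) / t)
    (x y z : ℝ) (hx : x = (li - lj) / 3) (hy : y = (li - lk) / 3) (hz : z = (lj - lk) / 3) :
    Real.exp li / ((li - lj) * (li - lk)) + Real.exp lj / ((lj - li) * (lj - lk))
        + Real.exp lk / ((lk - li) * (lk - lj))
      = 1 / 9 * Real.exp (li / 3) * Real.exp (lj / 3) * Real.exp (lk / 3) *
        (g x * g y + g (-x) * g z + g (-y) * g (-z)
          + (g (-x) - g (-y)) / (y - x) + (g x - g (-z)) / (x + z)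
          + (g y - g z) / (y - z)) := by
  have hx0 : x ≠ 0 := by rw [hx]; exact div_ne_zero (sub_ne_zero.2 hij) three_ne_zero
  have hy0 : y ≠ 0 := by rw [hy]; exact div_ne_zero (sub_ne_zero.2 hik) three_ne_zero
  have hz0 : z ≠ 0 := by rw [hz]; exact div_ne_zero (sub_ne_zero.2 hjk) three_ne_zero
  rw [sum_mul_add_sum_slope_eq exp g hg hx0 hy0 hz0 (by rw [hx, hy, hz]; ring)]
  have hi : exp li = exp (li / 3) * exp (lj / 3) * exp (lk / 3) * (exp x * exp y) := by
    simp only [← exp_add]; congr 1; rw [hx, hy]; ring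
  have hj : exp lj = exp (li / 3) * exp (lj / 3) * exp (lk / 3) * (exp (-x) * exp z) := by
    simp only [← exp_add]; congr 1; rw [hx, hz]; ring
  have hk : exp lk = exp (li / 3) * exp (lj / 3) * exp (lk / 3) * (exp (-y) * exp (-z)) := by
    simp only [← exp_add]; congr 1; rw [hy, hz]; ring
  rw [hi, hj, hk, show li - lj = 3 * x by rw [hx]; ring, show li - lk = 3 * y by rw [hy]; ring,
    show lj - li = -(3 * x) by rw [hx]; ring, show lj - lk = 3 * z by rw [hz]; ring,
    show lk - li = -(3 * y) by rw [hy]; ring, show lk - lj = -(3 * z) by rw [hz]; ring]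
  field_simp
  ring
end
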